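/- Let (X, μ) be a measure space with μ(X) < ∞ and let f satisfy assumption (f1). If u, v : X → ℝ are measurable functions belonging to L⁶(μ), then f∘u − f∘v belongs to L²(μ) and ‖f∘u − f∘v‖_{L²(μ)} ≤ C_f (μ(X)^{1/3} + ‖u‖_{L⁶(μ)}² + ‖v‖_{L⁶(μ)}²) ‖u − v‖_{L⁶(μ)}. -/

import Mathlib

open MeasureTheory
open scoped ENNReal

/-! By the mean value theorem and the growth bound on `f'`,
`|f a - f b| ≤ C_f (1 + a² + b²) |a - b|` pointwise. Hölder's inequality with
`1/2 = 1/3 + 1/6` then bounds the `L²` norm of `f∘u − f∘v` by the `L³` norm of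
`C_f (1 + u² + v²)` times `‖u − v‖_{L⁶}`, and the triangle inequality in `L³`, together with
`‖w²‖_{L³} = ‖w‖_{L⁶}²` and `‖1‖_{L³} = μ(X)^{1/3}`, gives the stated constant. -/

instance ENNReal.holderTriple_three_six_two : ENNReal.HolderTriple 3 6 2 := by
  rw [ENNReal.holderTriple_iff, ← ENNReal.coe_ofNat, ← ENNReal.coe_ofNat, ← ENNReal.coe_ofNat,
    ← ENNReal.coe_inv (by norm_num), ← ENNReal.coe_inv (by norm_num),
    ← ENNReal.coe_inv (by norm_num)]
  norm_cast
  norm_num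

lemma sq_le_sq_add_sq_of_mem_uIcc {a b x : ℝ} (hx : x ∈ Set.uIcc a b) : x ^ 2 ≤ a ^ 2 + b ^ 2 := by
  rw [Set.mem_uIcc] at hx
  rcases hx with ⟨h₁, h₂⟩ | ⟨h₁, h₂⟩ <;> rcases le_total 0 x with h | h <;> nlinarith

lemma abs_sub_le_of_abs_deriv_le {f : ℝ → ℝ} {C : ℝ} (hf : Differentiable ℝ f)
    (hf' : ∀ z, |deriv f z| ≤ C * (1 + z ^ 2)) (a b : ℝ) :
    |f a - f b| ≤ C * (1 + a ^ 2 + b ^ 2) * |a - b| := by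
  have hC : 0 ≤ C := by simpa using (abs_nonneg _).trans (hf' 0)
  have hbound : ∀ x ∈ Set.uIcc b a, ‖deriv f x‖ ≤ C * (1 + a ^ 2 + b ^ 2) := fun x hx => by
    have := sq_le_sq_add_sq_of_mem_uIcc hx
    calc ‖deriv f x‖ ≤ C * (1 + x ^ 2) := hf' x
      _ ≤ C * (1 + a ^ 2 + b ^ 2) := mul_le_mul_of_nonneg_left (by linarith) hC
  simpa [Real.norm_eq_abs] using (convex_uIcc b a).norm_image_sub_le_of_norm_deriv_le
    (fun x _ => hf x) hbound Set.left_mem_uIcc Set.right_mem_uIcc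

section

variable {α : Type*} [MeasurableSpace α] {μ : Measure α}

lemma eLpNorm_sq (w : α → ℝ) (p : ℝ≥0∞) :
    eLpNorm (fun x => w x ^ 2) p μ = eLpNorm w (p * 2) μ ^ 2 := by
  simpa [Real.rpow_two, sq_abs] using eLpNorm_norm_rpow (μ := μ) (p := p) w two_pos

lemma eLpNorm_one_add_sq_add_sq_le {u v : α → ℝ} (hu : AEStronglyMeasurable u μ)
    (hv : AEStronglyMeasurable v μ) {p : ℝ≥0∞} (hp : 1 ≤ p) (hp_top : p ≠ ∞) :
    eLpNorm (fun x => 1 + u x ^ 2 + v x ^ 2) p μ ≤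
      μ Set.univ ^ (1 / p.toReal) + eLpNorm u (p * 2) μ ^ 2 + eLpNorm v (p * 2) μ ^ 2 := by
  have hone : eLpNorm (fun _ => (1 : ℝ)) p μ = μ Set.univ ^ (1 / p.toReal) := by
    simp [eLpNorm_const' (1 : ℝ) (by positivity) hp_top]
  rw [← eLpNorm_sq, ← eLpNorm_sq, ← hone]
  refine (eLpNorm_add_le (aestronglyMeasurable_const.add (hu.pow 2)) (hv.pow 2) hp).trans ?_
  exact add_le_add_left (eLpNorm_add_le aestronglyMeasurable_const (hu.pow 2) hp) _

end

theorem comp_f_sub_mem_L2_general {X : Type*} [MeasurableSpace X] (μ : Measure X)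
    (hμ : μ Set.univ < ⊤)
    (f : ℝ → ℝ) (Cf : ℝ) (hf : ContDiff ℝ 1 f)
    (hf' : ∀ z : ℝ, |deriv f z| ≤ Cf * (1 + z ^ 2))
    (u v : X → ℝ)
    (hu6 : MemLp u 6 μ) (hv6 : MemLp v 6 μ) :
    MemLp (fun x => f (u x) - f (v x)) 2 μ ∧
    eLpNorm (fun x => f (u x) - f (v x)) 2 μ ≤
      ENNReal.ofReal Cf *
        ((μ Set.univ) ^ (1 / 3 : ℝ) + (eLpNorm u 6 μ) ^ 2 + (eLpNorm v 6 μ) ^ 2) *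
        eLpNorm (fun x => u x - v x) 6 μ := by
  have hC : 0 ≤ Cf := by simpa using (abs_nonneg _).trans (hf' 0)
  have hbound : eLpNorm (fun x => f (u x) - f (v x)) 2 μ ≤
      ENNReal.ofReal Cf *
        ((μ Set.univ) ^ (1 / 3 : ℝ) + (eLpNorm u 6 μ) ^ 2 + (eLpNorm v 6 μ) ^ 2) *
        eLpNorm (fun x => u x - v x) 6 μ := calc
    _ ≤ eLpNorm (Cf • ((fun x => 1 + u x ^ 2 + v x ^ 2) • fun x => u x - v x)) 2 μ := by
      refine eLpNorm_mono fun x => ?_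
      simpa [abs_mul, abs_of_nonneg hC, abs_of_nonneg (by positivity : 0 ≤ 1 + u x ^ 2 + v x ^ 2),
        mul_assoc] using abs_sub_le_of_abs_deriv_le (hf.differentiable one_ne_zero) hf' (u x) (v x)
    _ ≤ ENNReal.ofReal Cf * (eLpNorm (fun x => 1 + u x ^ 2 + v x ^ 2) 3 μ *
          eLpNorm (fun x => u x - v x) 6 μ) := by
      rw [eLpNorm_const_smul, Real.enorm_eq_ofReal hC]
      gcongr
      exact eLpNorm_smul_le_mul_eLpNorm (hu6.1.sub hv6.1)
        ((aestronglyMeasurable_const.add (hu6.1.pow 2)).add (hv6.1.pow 2))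
    _ ≤ _ := by
      rw [← mul_assoc]
      gcongr
      simpa [show (3 : ℝ≥0∞) * 2 = 6 by norm_num] using
        eLpNorm_one_add_sq_add_sq_le hu6.1 hv6.1 (p := 3) (by norm_num) (by norm_num)
  refine ⟨⟨?_, hbound.trans_lt ?_⟩, hbound⟩
  · exact (hf.continuous.comp_aestronglyMeasurable hu6.1).sub
      (hf.continuous.comp_aestronglyMeasurable hv6.1)
  · have := hu6.eLpNorm_lt_top
    have := hv6.eLpNorm_lt_top
    have := (hu6.sub hv6).eLpNorm_lt_top
    finiteness

/-- Let `(X, μ)` be a finite measure space and `f` satisfy assumption (f1):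
`f` is `C¹`, `f 0 = 0`, `|f'(z)| ≤ C_f (1 + z²)`.  If `u, v ∈ L⁶(μ)`, then
`f∘u − f∘v ∈ L²(μ)` and
`‖f∘u − f∘v‖_{L²} ≤ C_f (μ(X)^{1/3} + ‖u‖_{L⁶}² + ‖v‖_{L⁶}²) ‖u − v‖_{L⁶}`. -/
theorem comp_f_sub_mem_L2 {X : Type*} [MeasurableSpace X] (μ : Measure X)
    (hμ : μ Set.univ < ⊤)
    (f : ℝ → ℝ) (Cf : ℝ) (hCf : 0 < Cf) (hf : ContDiff ℝ 1 f) (hf0 : f 0 = 0)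
    (hf' : ∀ z : ℝ, |deriv f z| ≤ Cf * (1 + z ^ 2))
    (u v : X → ℝ) (hu : Measurable u) (hv : Measurable v)
    (hu6 : MemLp u 6 μ) (hv6 : MemLp v 6 μ) :
    MemLp (fun x => f (u x) - f (v x)) 2 μ ∧
    eLpNorm (fun x => f (u x) - f (v x)) 2 μ ≤
      ENNReal.ofReal Cf *
        ((μ Set.univ) ^ (1 / 3 : ℝ) + (eLpNorm u 6 μ) ^ 2 + (eLpNorm v 6 μ) ^ 2) *
        eLpNorm (fun x => u x - v x) 6 μ :=
  comp_f_sub_mem_L2_general μ hμ f Cf hf hf' u v hu6 hv6
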